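/- arXiv:1602.02970 — 6 statements merged into one kernel-verified Lean document; each statement's English description precedes it below -/
import Mathlib

section
/- For every x ∈ ℝ^d and all ε, ε̃ ∈ [−α₀, α₀] one has (m²/2)·|ε − ε̃| ≤ |φ(x + ε·∇φ(x)) − φ(x + ε̃·∇φ(x))| ≤ M²·|ε − ε̃|. (Quantitative form of the fundamental relation (2.2) for level set functions.) -/
open Set

/-- Quantitative form of the fundamental relation (2.2) for level set functions:
for all `x` and `ε, ε̃ ∈ [-α₀, α₀]`,
`(m²/2)·|ε - ε'| ≤ |φ(x + ε∇φ(x)) - φ(x + ε'∇φ(x))| ≤ M²·|ε - ε'|`. -/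
theorem stmt0 (d : ℕ) (hd : 1 ≤ d)
    (φ : EuclideanSpace ℝ (Fin d) → ℝ) (hφ : ContDiff ℝ 2 φ)
    (m M K : ℝ) (hm0 : 0 < m) (hmM : m ≤ M) (hK : 0 < K)
    (hgrad_lb : ∀ y, m ≤ ‖gradient φ y‖)
    (hgrad_ub : ∀ y, ‖gradient φ y‖ ≤ M)
    (hD2 : ∀ y, ‖iteratedFDeriv ℝ 2 φ y‖ ≤ K)
    (α₀ : ℝ) (hα₀ : α₀ = m ^ 2 / (2 * K * M ^ 2))
    (x : EuclideanSpace ℝ (Fin d)) (ε ε' : ℝ)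
    (hε : ε ∈ Icc (-α₀) α₀) (hε' : ε' ∈ Icc (-α₀) α₀) :
    m ^ 2 / 2 * |ε - ε'| ≤ |φ (x + ε • gradient φ x) - φ (x + ε' • gradient φ x)| ∧
      |φ (x + ε • gradient φ x) - φ (x + ε' • gradient φ x)| ≤ M ^ 2 * |ε - ε'| := by
  have hM0 : (0:ℝ) < M := lt_of_lt_of_le hm0 hmM
  have hdiff : Differentiable ℝ φ := hφ.differentiable (by norm_num)
  -- the second derivative of φ (as fderiv of fderiv) is bounded by K
  have hfd2 : ∀ y, ‖fderiv ℝ (fderiv ℝ φ) y‖ ≤ ‖iteratedFDeriv ℝ 2 φ y‖ := by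
    intro y
    rw [← norm_iteratedFDeriv_fderiv]
    refine ContinuousLinearMap.opNorm_le_bound _ (norm_nonneg _) fun v => ?_
    calc ‖fderiv ℝ (fderiv ℝ φ) y v‖
        = ‖iteratedFDeriv ℝ 1 (fderiv ℝ φ) y (fun _ => v)‖ := by
          rw [iteratedFDeriv_one_apply]
      _ ≤ ‖iteratedFDeriv ℝ 1 (fderiv ℝ φ) y‖ * ∏ _i : Fin 1, ‖v‖ :=
          ContinuousMultilinearMap.le_opNorm _ _
      _ = ‖iteratedFDeriv ℝ 1 (fderiv ℝ φ) y‖ * ‖v‖ := by simp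
  have hfd_cd : ContDiff ℝ 1 (fderiv ℝ φ) := hφ.fderiv_right (by norm_num)
  -- the gradient is K-Lipschitz
  have hlip : ∀ a b, ‖gradient φ a - gradient φ b‖ ≤ K * ‖a - b‖ := by
    intro a b
    have h1 : ∀ z ∈ (univ : Set (EuclideanSpace ℝ (Fin d))),
        ‖fderiv ℝ (fderiv ℝ φ) z‖ ≤ K := fun z _ => (hfd2 z).trans (hD2 z)
    have := convex_univ.norm_image_sub_le_of_norm_fderiv_le
      (fun z _ => hfd_cd.differentiable one_ne_zero z) h1
      (mem_univ b) (mem_univ a)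
    calc ‖gradient φ a - gradient φ b‖
        = ‖fderiv ℝ φ a - fderiv ℝ φ b‖ := by
          rw [gradient, gradient, ← map_sub, LinearIsometryEquiv.norm_map]
      _ ≤ K * ‖a - b‖ := this
  set u := gradient φ x with hu
  -- derivative of the scalar function g(t) = φ(x + t • u)
  set g' : ℝ → ℝ := fun t => inner ℝ (gradient φ (x + t • u)) u with hg'
  have hder : ∀ t : ℝ, HasDerivAt (fun s => φ (x + s • u)) (g' t) t := by
    intro t
    have hline : HasDerivAt (fun s : ℝ => x + s • u) u t := by
      simpa using ((hasDerivAt_id t).smul_const u).const_add x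
    have hgr : HasGradientAt φ (gradient φ (x + t • u)) (x + t • u) :=
      (hdiff (x + t • u)).hasGradientAt
    have hfda := hgr.hasFDerivAt
    have := hfda.comp_hasDerivAt t hline
    simpa [hg', Function.comp_def] using this
  -- bounds on g' on [-α₀, α₀]
  have hα₀pos : 0 < α₀ := by
    rw [hα₀]; positivity
  have hKα : K * α₀ * M ^ 2 = m ^ 2 / 2 := by
    rw [hα₀]; field_simp
  have hub : ∀ t : ℝ, |g' t| ≤ M ^ 2 := by
    intro t
    calc |g' t| ≤ ‖gradient φ (x + t • u)‖ * ‖u‖ := abs_real_inner_le_norm _ _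
      _ ≤ M * M := by
          exact mul_le_mul (hgrad_ub _) (hgrad_ub x) (norm_nonneg _) hM0.le
      _ = M ^ 2 := (sq M).symm
  have hlb : ∀ t ∈ Icc (-α₀) α₀, m ^ 2 / 2 ≤ g' t := by
    intro t ht
    have habs : |t| ≤ α₀ := abs_le.mpr ⟨ht.1, ht.2⟩
    have h1 : g' t = inner ℝ u u + inner ℝ (gradient φ (x + t • u) - u) u := by
      rw [hg']; simp [inner_sub_left]
    have h2 : m ^ 2 ≤ (inner ℝ u u : ℝ) := by
      rw [real_inner_self_eq_norm_sq]
      exact pow_le_pow_left₀ hm0.le (hgrad_lb x) 2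
    have h3 : |(inner ℝ (gradient φ (x + t • u) - u) u : ℝ)| ≤ m ^ 2 / 2 := by
      calc |(inner ℝ (gradient φ (x + t • u) - u) u : ℝ)|
          ≤ ‖gradient φ (x + t • u) - u‖ * ‖u‖ := abs_real_inner_le_norm _ _
        _ ≤ (K * ‖t • u‖) * ‖u‖ := by
            refine mul_le_mul_of_nonneg_right ?_ (norm_nonneg _)
            have := hlip (x + t • u) x
            simpa using this
        _ = K * |t| * (‖u‖ * ‖u‖) := by
            rw [norm_smul, Real.norm_eq_abs]; ring
        _ ≤ K * α₀ * (M * M) := by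
            refine mul_le_mul (by nlinarith) ?_ (by positivity) (by positivity)
            exact mul_le_mul (hgrad_ub x) (hgrad_ub x) (norm_nonneg _) hM0.le
        _ = m ^ 2 / 2 := by rw [← hKα]; ring
    nlinarith [abs_le.mp h3]
  -- main argument via MVT; WLOG for order
  have key : ∀ a b : ℝ, a ∈ Icc (-α₀) α₀ → b ∈ Icc (-α₀) α₀ → a < b →
      m ^ 2 / 2 * (b - a) ≤ φ (x + b • u) - φ (x + a • u) ∧
        φ (x + b • u) - φ (x + a • u) ≤ M ^ 2 * (b - a) := by
    intro a b ha hb hab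
    obtain ⟨c, hc, hceq⟩ := exists_hasDerivAt_eq_slope (fun s => φ (x + s • u)) g' hab
      (fun s _ => (hder s).continuousAt.continuousWithinAt)
      (fun s _ => hder s)
    have hcmem : c ∈ Icc (-α₀) α₀ :=
      ⟨ha.1.trans (hc.1.le), hc.2.le.trans hb.2⟩
    have hslope : φ (x + b • u) - φ (x + a • u) = g' c * (b - a) := by
      rw [hceq, div_mul_cancel₀ _ (by linarith : b - a ≠ 0)]
    constructor
    · rw [hslope]
      exact mul_le_mul_of_nonneg_right (hlb c hcmem) (by linarith)
    · rw [hslope]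
      have := (abs_le.mp (hub c)).2
      nlinarith
  rcases lt_trichotomy ε ε' with h | h | h
  · obtain ⟨h1, h2⟩ := key ε ε' hε hε' h
    have habs : |ε - ε'| = ε' - ε := by rw [abs_of_nonpos (by linarith)]; ring
    have habs2 : |φ (x + ε • u) - φ (x + ε' • u)| = |φ (x + ε' • u) - φ (x + ε • u)| :=
      abs_sub_comm _ _
    rw [habs, habs2]
    constructor
    · exact le_trans h1 (le_abs_self _)
    · have hnn : 0 ≤ m ^ 2 / 2 * (ε' - ε) := mul_nonneg (by positivity) (by linarith)
      calc |φ (x + ε' • u) - φ (x + ε • u)| = φ (x + ε' • u) - φ (x + ε • u) := by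
            rw [abs_of_nonneg]; linarith
        _ ≤ M ^ 2 * (ε' - ε) := h2
  · subst h
    constructor <;> simp
  · obtain ⟨h1, h2⟩ := key ε' ε hε' hε h
    have habs : |ε - ε'| = ε - ε' := abs_of_nonneg (by linarith)
    rw [habs]
    constructor
    · exact le_trans h1 (le_abs_self _)
    · have hnn : 0 ≤ m ^ 2 / 2 * (ε - ε') := mul_nonneg (by positivity) (by linarith)
      calc |φ (x + ε • u) - φ (x + ε' • u)| = φ (x + ε • u) - φ (x + ε' • u) := by
            rw [abs_of_nonneg]; linarith
        _ ≤ M ^ 2 * (ε - ε') := h2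
end

section
/- For every x ∈ ℝ^d and every r ∈ ℝ with |r − φ(x)| ≤ α₀·m²/2 there exists a unique α ∈ [−α₀, α₀] such that φ(x + α·∇φ(x)) = r; moreover this α satisfies |α| ≤ (2/m²)·|r − φ(x)|. (Core existence, uniqueness and size estimate for the step length d(x) defined by φ(x + d(x)∇φ(x)) = φ̂_h(x) in Lemma 3.1 of the paper.) -/
open Set

set_option maxHeartbeats 1000000 in
/-- Core existence, uniqueness and size estimate for the step length `d(x)` defined by
`φ(x + d(x)∇φ(x)) = φ̂ₕ(x)` (Lemma 3.1 of the paper): for every `x` and every `r` with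
`|r - φ(x)| ≤ α₀·m²/2` there exists a unique `α ∈ [-α₀, α₀]` with `φ(x + α∇φ(x)) = r`,
and this `α` satisfies `|α| ≤ (2/m²)·|r - φ(x)|`. -/
theorem stmt1 (d : ℕ) (hd : 1 ≤ d)
    (φ : EuclideanSpace ℝ (Fin d) → ℝ) (hφ : ContDiff ℝ 2 φ)
    (m M K : ℝ) (hm0 : 0 < m) (hmM : m ≤ M) (hK : 0 < K)
    (hgrad_lb : ∀ y, m ≤ ‖gradient φ y‖)
    (hgrad_ub : ∀ y, ‖gradient φ y‖ ≤ M)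
    (hD2 : ∀ y, ‖iteratedFDeriv ℝ 2 φ y‖ ≤ K)
    (α₀ : ℝ) (hα₀ : α₀ = m ^ 2 / (2 * K * M ^ 2))
    (x : EuclideanSpace ℝ (Fin d)) (r : ℝ)
    (hr : |r - φ x| ≤ α₀ * m ^ 2 / 2) :
    ∃ α : ℝ,
      (α ∈ Icc (-α₀) α₀ ∧ φ (x + α • gradient φ x) = r ∧
        |α| ≤ 2 / m ^ 2 * |r - φ x|) ∧
      ∀ β ∈ Icc (-α₀) α₀, φ (x + β • gradient φ x) = r → β = α := by
  have hdφ : Differentiable ℝ φ := hφ.differentiable (by norm_num)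
  have hfd1 : ContDiff ℝ 1 (fderiv ℝ φ) := hφ.fderiv_right (by norm_num)
  have hdf : Differentiable ℝ (fderiv ℝ φ) := hfd1.differentiable one_ne_zero
  -- bound on the second derivative as a bilinear map
  have hbd : ∀ z, ‖fderiv ℝ (fderiv ℝ φ) z‖ ≤ K := by
    intro z
    refine ContinuousLinearMap.opNorm_le_bound _ hK.le fun u => ?_
    refine ContinuousLinearMap.opNorm_le_bound _ (by positivity) fun w => ?_
    have h1 : fderiv ℝ (fderiv ℝ φ) z u w = iteratedFDeriv ℝ 2 φ z ![u, w] := by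
      rw [iteratedFDeriv_two_apply]
      simp
    calc ‖fderiv ℝ (fderiv ℝ φ) z u w‖ = ‖iteratedFDeriv ℝ 2 φ z ![u, w]‖ := by rw [h1]
      _ ≤ ‖iteratedFDeriv ℝ 2 φ z‖ * ∏ i, ‖![u, w] i‖ :=
          ContinuousMultilinearMap.le_opNorm _ _
      _ = ‖iteratedFDeriv ℝ 2 φ z‖ * (‖u‖ * ‖w‖) := by
          rw [Fin.prod_univ_two]; simp
      _ ≤ K * (‖u‖ * ‖w‖) := by
          have := hD2 z
          have hn : 0 ≤ ‖u‖ * ‖w‖ := by positivity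
          nlinarith
      _ = K * ‖u‖ * ‖w‖ := by ring
  -- the gradient is K-Lipschitz
  have hLip : ∀ y z, ‖gradient φ y - gradient φ z‖ ≤ K * ‖y - z‖ := by
    intro y z
    have heq : gradient φ y - gradient φ z =
        (InnerProductSpace.toDual ℝ _).symm (fderiv ℝ φ y - fderiv ℝ φ z) := by
      simp [gradient, map_sub]
    rw [heq, LinearIsometryEquiv.norm_map]
    exact Convex.norm_image_sub_le_of_norm_hasFDerivWithin_le
      (fun w _ => (hdf w).hasFDerivAt.hasFDerivWithinAt) (fun w _ => hbd w)
      convex_univ (mem_univ z) (mem_univ y)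
  have hinner : ∀ y (w : EuclideanSpace ℝ (Fin d)),
      fderiv ℝ φ y w = inner ℝ (gradient φ y) w := by
    intro y w
    rw [gradient]
    exact (InnerProductSpace.toDual_symm_apply).symm
  set v := gradient φ x with hv
  set g : ℝ → ℝ := fun a => φ (x + a • v) with hgdef
  have hline : ∀ a : ℝ, HasDerivAt (fun a : ℝ => x + a • v) v a := by
    intro a
    have h1 : HasDerivAt (fun a : ℝ => a • v) ((1 : ℝ) • v) a :=
      (hasDerivAt_id a).smul_const v
    simpa using h1.const_add x
  have hgd : ∀ a : ℝ, HasDerivAt g (inner ℝ (gradient φ (x + a • v)) v : ℝ) a := by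
    intro a
    have h1 := ((hdφ (x + a • v)).hasFDerivAt.comp_hasDerivAt a (hline a))
    rwa [hinner] at h1
  have hvm : m ≤ ‖v‖ := hgrad_lb x
  have hvM : ‖v‖ ≤ M := hgrad_ub x
  have hM0 : 0 < M := lt_of_lt_of_le hm0 hmM
  have hα₀pos : 0 < α₀ := by rw [hα₀]; positivity
  have hKα : K * α₀ * M ^ 2 = m ^ 2 / 2 := by
    have hKne : K ≠ 0 := hK.ne'
    have hMne : M ≠ 0 := hM0.ne'
    rw [hα₀]
    field_simp
  have hderiv_lb : ∀ a ∈ Icc (-α₀) α₀, m ^ 2 / 2 ≤ deriv g a := by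
    intro a ha
    rw [(hgd a).deriv]
    have habs : |a| ≤ α₀ := abs_le.2 ⟨ha.1, ha.2⟩
    have h2 : ‖gradient φ (x + a • v) - v‖ ≤ K * (|a| * ‖v‖) := by
      have h := hLip (x + a • v) x
      rw [← hv] at h
      simpa [norm_smul] using h
    have hsplit : (inner ℝ (gradient φ (x + a • v)) v : ℝ) =
        (inner ℝ v v : ℝ) + (inner ℝ (gradient φ (x + a • v) - v) v : ℝ) := by
      rw [inner_sub_left]; ring
    have hvv : (inner ℝ v v : ℝ) = ‖v‖ ^ 2 := real_inner_self_eq_norm_sq v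
    have hcs : |(inner ℝ (gradient φ (x + a • v) - v) v : ℝ)| ≤
        ‖gradient φ (x + a • v) - v‖ * ‖v‖ := abs_real_inner_le_norm _ _
    have hineq : ‖gradient φ (x + a • v) - v‖ * ‖v‖ ≤ m ^ 2 / 2 := by
      have h3 : ‖gradient φ (x + a • v) - v‖ * ‖v‖ ≤ K * (|a| * ‖v‖) * ‖v‖ := by
        apply mul_le_mul_of_nonneg_right h2 (norm_nonneg v)
      have h4 : K * (|a| * ‖v‖) * ‖v‖ ≤ K * α₀ * M ^ 2 := by
        have h5 : 0 ≤ |a| := abs_nonneg a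
        have h6 : 0 ≤ ‖v‖ := norm_nonneg v
        have h7 : |a| * ‖v‖ ≤ α₀ * M := mul_le_mul habs hvM h6 hα₀pos.le
        have h8 : |a| * ‖v‖ * ‖v‖ ≤ α₀ * M * M :=
          mul_le_mul h7 hvM h6 (by positivity)
        calc K * (|a| * ‖v‖) * ‖v‖ = K * (|a| * ‖v‖ * ‖v‖) := by ring
          _ ≤ K * (α₀ * M * M) := mul_le_mul_of_nonneg_left h8 hK.le
          _ = K * α₀ * M ^ 2 := by ring
      linarith [hKα ▸ (h3.trans h4)]
    have hlow := (abs_le.1 hcs).1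
    nlinarith
  have hcont : Continuous g := by
    apply hdφ.continuous.comp
    exact continuous_const.add (continuous_id.smul continuous_const)
  have hgdiff : Differentiable ℝ g := fun a => (hgd a).differentiableAt
  have hkey : ∀ a ∈ Icc (-α₀) α₀, ∀ b ∈ Icc (-α₀) α₀, a ≤ b →
      m ^ 2 / 2 * (b - a) ≤ g b - g a := by
    intro a ha b hb hab
    exact (convex_Icc _ _).mul_sub_le_image_sub_of_le_deriv hcont.continuousOn
      hgdiff.differentiableOn
      (fun z hz => hderiv_lb z (interior_subset hz)) a ha b hb hab
  have h0mem : (0 : ℝ) ∈ Icc (-α₀) α₀ := ⟨by linarith, hα₀pos.le⟩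
  have hg0 : g 0 = φ x := by simp [hgdef]
  have hmemL : -α₀ ∈ Icc (-α₀) α₀ := left_mem_Icc.2 (by linarith)
  have hmemR : α₀ ∈ Icc (-α₀) α₀ := right_mem_Icc.2 (by linarith)
  have habs := abs_le.1 hr
  have hup : r ≤ g α₀ := by
    have h1 := hkey 0 h0mem α₀ hmemR hα₀pos.le
    rw [hg0] at h1
    nlinarith
  have hlo : g (-α₀) ≤ r := by
    have h1 := hkey (-α₀) hmemL 0 h0mem (by linarith)
    rw [hg0] at h1
    nlinarith
  obtain ⟨α, hαmem, hαr⟩ := intermediate_value_Icc (by linarith : -α₀ ≤ α₀)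
    hcont.continuousOn ⟨hlo, hup⟩
  have hm2 : (0 : ℝ) < m ^ 2 := by positivity
  have hsize : |α| ≤ 2 / m ^ 2 * |r - φ x| := by
    have habs2 := le_abs_self (r - φ x)
    have habs3 := neg_abs_le (r - φ x)
    rcases le_or_gt 0 α with h | h
    · have h1 := hkey 0 h0mem α hαmem h
      rw [hαr, hg0] at h1
      rw [abs_of_nonneg h]
      rw [div_mul_eq_mul_div, le_div_iff₀ hm2]
      nlinarith
    · have h1 := hkey α hαmem 0 h0mem h.le
      rw [hαr, hg0] at h1
      rw [abs_of_neg h]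
      rw [div_mul_eq_mul_div, le_div_iff₀ hm2]
      nlinarith
  refine ⟨α, ⟨hαmem, hαr, hsize⟩, ?_⟩
  intro β hβ hβr
  have hβr' : g β = r := hβr
  by_contra hne
  rcases lt_or_gt_of_ne hne with hlt | hgt
  · have h1 := hkey β hβ α hαmem hlt.le
    rw [hαr, hβr'] at h1
    nlinarith
  · have h1 := hkey α hαmem β hβ hgt.le
    rw [hαr, hβr'] at h1
    nlinarith
end

section
/- Suppose in addition that ψ : ℝ^d → ℝ is differentiable and δ : ℝ^d → ℝ is differentiable and satisfies φ(x + δ(x)·∇φ(x)) = ψ(x) for all x ∈ ℝ^d, with |δ(x)| ≤ η for all x, where 0 ≤ η ≤ α₀. Then for every x ∈ ℝ^d one has ‖∇δ(x)‖ ≤ (2/m²)·( ‖∇ψ(x) − ∇φ(x)‖ + 2KMη ). (Core gradient bound for the step length function d, proving estimate (3.3c) of Lemma 3.1.) -/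
set_option maxHeartbeats 1000000
open Set InnerProductSpace

local notation "⟪" x ", " y "⟫" => @inner ℝ _ _ x y

section aux
variable {E : Type*} [NormedAddCommGroup E] [InnerProductSpace ℝ E] [CompleteSpace E]

/-- Real-linear version of `InnerProductSpace.toDual`. -/
noncomputable def realToDual (E : Type*) [NormedAddCommGroup E] [InnerProductSpace ℝ E]
    [CompleteSpace E] : E ≃ₗᵢ[ℝ] StrongDual ℝ E where
  toFun := toDual ℝ E
  invFun := (toDual ℝ E).symm
  map_add' := map_add _
  map_smul' := fun c x => by simp
  left_inv := fun x => (toDual ℝ E).symm_apply_apply x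
  right_inv := fun x => (toDual ℝ E).apply_symm_apply x
  norm_map' := fun x => (toDual ℝ E).norm_map x

lemma realToDual_symm_eq (f : StrongDual ℝ E) :
    (realToDual E).symm f = (toDual ℝ E).symm f := rfl

lemma grad_eq (f : E → ℝ) (x : E) : (toDual ℝ E) (gradient f x) = fderiv ℝ f x :=
  (toDual ℝ E).apply_symm_apply _

lemma grad_eq' (f : E → ℝ) (x : E) : gradient f x = (realToDual E).symm (fderiv ℝ f x) := rfl

lemma fderiv_apply_eq_inner_grad (f : E → ℝ) (x : E) (v : E) :
    fderiv ℝ f x v = ⟪gradient f x, v⟫ := by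
  rw [← grad_eq f x]; rfl

lemma norm_grad (f : E → ℝ) (x : E) : ‖gradient f x‖ = ‖fderiv ℝ f x‖ := by
  rw [← grad_eq f x]; exact ((toDual ℝ E).norm_map _).symm

noncomputable def dualIsoCLM (E : Type*) [NormedAddCommGroup E] [InnerProductSpace ℝ E]
    [CompleteSpace E] : StrongDual ℝ E →L[ℝ] E :=
  ((realToDual E).symm.toContinuousLinearEquiv : StrongDual ℝ E ≃L[ℝ] E)

lemma norm_dualIsoCLM_apply (f : StrongDual ℝ E) : ‖dualIsoCLM E f‖ = ‖f‖ :=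
  (realToDual E).symm.norm_map f

lemma gradient_eq_comp (f : E → ℝ) : gradient f = fun y => dualIsoCLM E (fderiv ℝ f y) := rfl

lemma hasFDerivAt_gradient {f : E → ℝ} {z : E} (hf : DifferentiableAt ℝ (fderiv ℝ f) z) :
    HasFDerivAt (gradient f) ((dualIsoCLM E).comp (fderiv ℝ (fderiv ℝ f) z)) z := by
  rw [gradient_eq_comp]
  exact ((dualIsoCLM E).hasFDerivAt).comp z hf.hasFDerivAt

end aux

/-- Core gradient bound for the step length function `d`, proving estimate (3.3c) of
Lemma 3.1: if `δ` is differentiable with `φ(x + δ(x)∇φ(x)) = ψ(x)` and `|δ(x)| ≤ η ≤ α₀`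
for all `x`, then `‖∇δ(x)‖ ≤ (2/m²)·(‖∇ψ(x) - ∇φ(x)‖ + 2KMη)`. -/
theorem stmt2 (d : ℕ) (hd : 1 ≤ d)
    (φ : EuclideanSpace ℝ (Fin d) → ℝ) (hφ : ContDiff ℝ 2 φ)
    (m M K : ℝ) (hm0 : 0 < m) (hmM : m ≤ M) (hK : 0 < K)
    (hgrad_lb : ∀ y, m ≤ ‖gradient φ y‖)
    (hgrad_ub : ∀ y, ‖gradient φ y‖ ≤ M)
    (hD2 : ∀ y, ‖iteratedFDeriv ℝ 2 φ y‖ ≤ K)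
    (α₀ : ℝ) (hα₀ : α₀ = m ^ 2 / (2 * K * M ^ 2))
    (ψ δ : EuclideanSpace ℝ (Fin d) → ℝ)
    (hψ : Differentiable ℝ ψ) (hδ : Differentiable ℝ δ)
    (η : ℝ) (hη0 : 0 ≤ η) (hηα₀ : η ≤ α₀)
    (heq : ∀ x, φ (x + δ x • gradient φ x) = ψ x)
    (hδbound : ∀ x, |δ x| ≤ η)
    (x : EuclideanSpace ℝ (Fin d)) :
    ‖gradient δ x‖ ≤ 2 / m ^ 2 * (‖gradient ψ x - gradient φ x‖ + 2 * K * M * η) := by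
  have hM0 : 0 < M := lt_of_lt_of_le hm0 hmM
  set g : EuclideanSpace ℝ (Fin d) → EuclideanSpace ℝ (Fin d) := gradient φ with hg
  -- differentiability facts
  have hφ1 : ContDiff ℝ 1 (fderiv ℝ φ) := hφ.fderiv_right (by norm_num)
  have hφd : Differentiable ℝ φ := hφ.differentiable (by norm_num)
  have hfd : Differentiable ℝ (fderiv ℝ φ) := hφ1.differentiable (by norm_num)
  -- second derivative bound as operator norm
  have hD2' : ∀ z, ‖fderiv ℝ (fderiv ℝ φ) z‖ ≤ K := by
    intro z
    have h1 : ‖iteratedFDeriv ℝ 1 (fderiv ℝ φ) z‖ ≤ K := by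
      rw [norm_iteratedFDeriv_fderiv]; exact hD2 z
    refine ContinuousLinearMap.opNorm_le_bound _ hK.le (fun u => ?_)
    refine ContinuousLinearMap.opNorm_le_bound _ (by positivity) (fun v => ?_)
    calc ‖fderiv ℝ (fderiv ℝ φ) z u v‖
        = ‖iteratedFDeriv ℝ 1 (fderiv ℝ φ) z ![u] v‖ := by
          rw [iteratedFDeriv_one_apply]; rfl
      _ ≤ ‖iteratedFDeriv ℝ 1 (fderiv ℝ φ) z ![u]‖ * ‖v‖ :=
          ContinuousLinearMap.le_opNorm _ _
      _ ≤ (‖iteratedFDeriv ℝ 1 (fderiv ℝ φ) z‖ * ‖u‖) * ‖v‖ := by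
          gcongr
          calc ‖iteratedFDeriv ℝ 1 (fderiv ℝ φ) z ![u]‖
              ≤ ‖iteratedFDeriv ℝ 1 (fderiv ℝ φ) z‖ * ∏ i : Fin 1, ‖![u] i‖ :=
              ContinuousMultilinearMap.le_opNorm _ _
            _ = ‖iteratedFDeriv ℝ 1 (fderiv ℝ φ) z‖ * ‖u‖ := by simp
      _ ≤ K * ‖u‖ * ‖v‖ := by gcongr
  -- gradient is Lipschitz with constant K
  have hgLip : ∀ y z, ‖g y - g z‖ ≤ K * ‖y - z‖ := by
    intro y z
    have h2 : ‖fderiv ℝ φ y - fderiv ℝ φ z‖ ≤ K * ‖y - z‖ :=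
      Convex.norm_image_sub_le_of_norm_fderiv_le (fun w _ => hfd w)
        (fun w _ => hD2' w) convex_univ trivial trivial
    calc ‖g y - g z‖ = ‖(toDual ℝ _) (g y - g z)‖ := ((toDual ℝ _).norm_map _).symm
      _ = ‖fderiv ℝ φ y - fderiv ℝ φ z‖ := by
          rw [map_sub]; rw [hg, grad_eq, grad_eq]
      _ ≤ K * ‖y - z‖ := h2
  -- g is differentiable, with derivative bounded by K
  have hgd : Differentiable ℝ g := fun z => (hasFDerivAt_gradient (hfd z)).differentiableAt
  have hDg_bound : ∀ z v, ‖fderiv ℝ g z v‖ ≤ K * ‖v‖ := by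
    intro z v
    rw [(hasFDerivAt_gradient (hfd z)).fderiv]
    calc ‖(dualIsoCLM _).comp (fderiv ℝ (fderiv ℝ φ) z) v‖
        = ‖fderiv ℝ (fderiv ℝ φ) z v‖ := norm_dualIsoCLM_apply _
      _ ≤ ‖fderiv ℝ (fderiv ℝ φ) z‖ * ‖v‖ := ContinuousLinearMap.le_opNorm _ _
      _ ≤ K * ‖v‖ := by gcongr; exact hD2' z
  -- the map F and its derivative
  set F : EuclideanSpace ℝ (Fin d) → EuclideanSpace ℝ (Fin d) :=
    fun y => y + δ y • g y with hF
  set Fx := x + δ x • g x with hFx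
  set Dδ := fderiv ℝ δ x with hDδ
  set Dg := fderiv ℝ g x with hDg
  have hDF : HasFDerivAt F (ContinuousLinearMap.id ℝ (EuclideanSpace ℝ (Fin d)) +
      (δ x • Dg + Dδ.smulRight (g x))) x :=
    (hasFDerivAt_id x).add (((hδ x).hasFDerivAt).smul (hgd x).hasFDerivAt)
  have hψF : ψ = φ ∘ F := by funext y; exact (heq y).symm
  have hchain : HasFDerivAt ψ ((fderiv ℝ φ Fx).comp
      (ContinuousLinearMap.id ℝ (EuclideanSpace ℝ (Fin d)) +
        (δ x • Dg + Dδ.smulRight (g x)))) x := by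
    rw [hψF]
    exact (hφd Fx).hasFDerivAt.comp x hDF
  have hfψ := hchain.fderiv
  -- key identity for directional derivatives
  have key : ∀ v, Dδ v * ⟪g Fx, g x⟫ =
      ⟪gradient ψ x - g Fx, v⟫ - δ x * ⟪g Fx, Dg v⟫ := by
    intro v
    have h1 : fderiv ℝ ψ x v = fderiv ℝ φ Fx (v + (δ x • Dg v + Dδ v • g x)) := by
      rw [hfψ]; rfl
    rw [fderiv_apply_eq_inner_grad, fderiv_apply_eq_inner_grad,
      inner_add_right, inner_add_right, real_inner_smul_right,
      real_inner_smul_right] at h1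
    rw [inner_sub_left]
    have h2 : ⟪gradient ψ x, v⟫ =
        ⟪g Fx, v⟫ + (δ x * ⟪g Fx, Dg v⟫ + Dδ v * ⟪g Fx, g x⟫) := h1
    linarith [h2]
  -- Lipschitz estimate along the displacement
  have hdiff : ‖g Fx - g x‖ ≤ K * M * η := by
    calc ‖g Fx - g x‖ ≤ K * ‖Fx - x‖ := hgLip Fx x
      _ = K * ‖δ x • g x‖ := by rw [hFx, add_sub_cancel_left]
      _ = K * (|δ x| * ‖g x‖) := by rw [norm_smul, Real.norm_eq_abs]
      _ ≤ K * (η * M) := by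
          gcongr
          · exact hδbound x
          · exact hgrad_ub x
      _ = K * M * η := by ring
  -- lower bound on the inner product
  have hcore : m ^ 2 / 2 ≤ ⟪g Fx, g x⟫ := by
    have h1 : ⟪g Fx, g x⟫ = ⟪g x, g x⟫ + ⟪g Fx - g x, g x⟫ := by
      rw [inner_sub_left]; ring
    have h2 : m ^ 2 ≤ ⟪g x, g x⟫ := by
      rw [real_inner_self_eq_norm_sq]
      have := hgrad_lb x
      nlinarith [norm_nonneg (g x)]
    have h3 : |⟪g Fx - g x, g x⟫| ≤ K * M * η * M := by
      calc |⟪g Fx - g x, g x⟫| ≤ ‖g Fx - g x‖ * ‖g x‖ := abs_real_inner_le_norm _ _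
        _ ≤ (K * M * η) * M := by gcongr; exact hgrad_ub x
    have h4 : K * M * η * M ≤ m ^ 2 / 2 := by
      have h5 : η * (2 * K * M ^ 2) ≤ m ^ 2 := by
        have := mul_le_mul_of_nonneg_right hηα₀
          (le_of_lt (by positivity : (0:ℝ) < 2 * K * M ^ 2))
        rw [hα₀, div_mul_cancel₀] at this
        · exact this
        · positivity
      nlinarith
    have := (abs_le.mp h3).1
    linarith
  have hc0 : 0 < ⟪g Fx, g x⟫ := lt_of_lt_of_le (by positivity) hcore
  -- bound the operator norm of Dδ
  have hbound : ∀ v, ‖Dδ v‖ ≤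
      2 / m ^ 2 * (‖gradient ψ x - gradient φ x‖ + 2 * K * M * η) * ‖v‖ := by
    intro v
    set N := ‖gradient ψ x - gradient φ x‖ + 2 * K * M * η with hN
    have hnum : |Dδ v * ⟪g Fx, g x⟫| ≤ N * ‖v‖ := by
      rw [key v]
      have e2 : ‖gradient ψ x - g Fx‖ ≤ ‖gradient ψ x - gradient φ x‖ + K * M * η := by
        have h6 : gradient ψ x - g Fx = (gradient ψ x - gradient φ x) + -(g Fx - g x) := by
          rw [hg]; abel
        rw [h6]
        refine (norm_add_le _ _).trans ?_
        rw [norm_neg]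
        gcongr
      have e3 : |δ x * ⟪g Fx, Dg v⟫| ≤ η * (M * (K * ‖v‖)) := by
        rw [abs_mul]
        have h7 : |⟪g Fx, Dg v⟫| ≤ M * (K * ‖v‖) := by
          calc |⟪g Fx, Dg v⟫| ≤ ‖g Fx‖ * ‖Dg v‖ := abs_real_inner_le_norm _ _
            _ ≤ M * (K * ‖v‖) := by
                have := hDg_bound x v
                have := hgrad_ub Fx
                have := norm_nonneg (Dg v)
                nlinarith [norm_nonneg (g Fx), norm_nonneg v]
        exact mul_le_mul (hδbound x) h7 (abs_nonneg _) hη0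
      calc |⟪gradient ψ x - g Fx, v⟫ - δ x * ⟪g Fx, Dg v⟫|
          ≤ |⟪gradient ψ x - g Fx, v⟫| + |δ x * ⟪g Fx, Dg v⟫| := abs_sub _ _
        _ ≤ ‖gradient ψ x - g Fx‖ * ‖v‖ + η * (M * (K * ‖v‖)) := by
            gcongr
            exact abs_real_inner_le_norm _ _
        _ ≤ (‖gradient ψ x - gradient φ x‖ + K * M * η) * ‖v‖
              + η * (M * (K * ‖v‖)) := by gcongr
        _ = N * ‖v‖ := by rw [hN]; ring
    have h5 : |Dδ v| * (m ^ 2 / 2) ≤ N * ‖v‖ := by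
      calc |Dδ v| * (m ^ 2 / 2) ≤ |Dδ v| * ⟪g Fx, g x⟫ := by
            gcongr
        _ = |Dδ v * ⟪g Fx, g x⟫| := by rw [abs_mul, abs_of_pos hc0]
        _ ≤ N * ‖v‖ := hnum
    have hm2 : (0:ℝ) < m ^ 2 / 2 := by positivity
    rw [Real.norm_eq_abs]
    calc |Dδ v| ≤ (N * ‖v‖) / (m ^ 2 / 2) := (le_div_iff₀ hm2).mpr h5
      _ = 2 / m ^ 2 * N * ‖v‖ := by field_simp
  have hop : ‖Dδ‖ ≤ 2 / m ^ 2 * (‖gradient ψ x - gradient φ x‖ + 2 * K * M * η) :=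
    ContinuousLinearMap.opNorm_le_bound _ (by positivity) hbound
  calc ‖gradient δ x‖ = ‖fderiv ℝ δ x‖ := norm_grad δ x
    _ ≤ _ := hop
end

section
/- For every x ∈ ℝ^d with |φ(x)| ≤ α₀·m²/2 there exists y ∈ ℝ^d with φ(y) = 0 and ‖x − y‖ ≤ (2M/m²)·|φ(x)|; in particular the distance from x to the zero level set {φ = 0} is at most (2M/m²)·|φ(x)|. (Quantitative distance-to-interface estimate underlying Lemma 3.6, dist(Γ_h, Γ) ≲ h^{k+1}.) -/
open Set

section Aux

variable {E : Type*} [NormedAddCommGroup E] [InnerProductSpace ℝ E] [CompleteSpace E]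

lemma aux_pos (φ : E → ℝ) (hφ : ContDiff ℝ 1 φ) (m K : ℝ) (hm : 0 < m) (hK0 : 0 ≤ K)
    (hlip : ∀ a b : E, ‖gradient φ a - gradient φ b‖ ≤ K * ‖a - b‖)
    (x : E) (hgx : m ≤ ‖gradient φ x‖) (h0 : 0 ≤ φ x)
    (hsm : K * (2 * φ x / m) ≤ m / 2) :
    ∃ y, φ y = 0 ∧ ‖x - y‖ ≤ 2 / m * φ x := by
  set G := gradient φ x with hG
  have hGn : G ≠ 0 := by
    intro h
    rw [h, norm_zero] at hgx; linarith
  set v : E := -(‖G‖⁻¹ • G) with hv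
  have hnv : ‖v‖ = 1 := by
    rw [hv, norm_neg, norm_smul, norm_inv, norm_norm]
    field_simp [norm_ne_zero_iff.2 hGn]
  set T : ℝ := 2 * φ x / m with hT
  have hT0 : 0 ≤ T := by positivity
  set g : ℝ → ℝ := fun t => φ (x + t • v) with hg
  have hline : ∀ t : ℝ, HasDerivAt (fun t : ℝ => x + t • v) v t := by
    intro t
    simpa using ((hasDerivAt_id t).smul_const v).const_add x
  have hg' : ∀ t : ℝ, HasDerivAt g (inner ℝ (gradient φ (x + t • v)) v : ℝ) t := by
    intro t
    have hd := (hφ.differentiable one_ne_zero (x + t • v)).hasGradientAt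
    have := hd.hasFDerivAt.comp_hasDerivAt t (hline t)
    exact this
  have hGv : (inner ℝ G v : ℝ) = -‖G‖ := by
    rw [hv, inner_neg_right, real_inner_smul_right, real_inner_self_eq_norm_sq]
    field_simp [norm_ne_zero_iff.2 hGn]
  have hderiv_le : ∀ t ∈ interior (Icc (0:ℝ) T), deriv g t ≤ -(m/2) := by
    intro t ht
    rw [interior_Icc, mem_Ioo] at ht
    rw [(hg' t).deriv]
    have h1 : (inner ℝ (gradient φ (x + t • v)) v : ℝ)
        = inner ℝ G v + (inner ℝ (gradient φ (x + t • v) - G) v : ℝ) := by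
      rw [inner_sub_left]; ring
    have h2 : (inner ℝ (gradient φ (x + t • v) - G) v : ℝ) ≤ K * t := by
      calc (inner ℝ (gradient φ (x + t • v) - G) v : ℝ)
          ≤ ‖gradient φ (x + t • v) - G‖ * ‖v‖ := real_inner_le_norm _ _
        _ = ‖gradient φ (x + t • v) - G‖ := by rw [hnv, mul_one]
        _ ≤ K * ‖(x + t • v) - x‖ := hlip _ _
        _ = K * t := by
            rw [add_sub_cancel_left, norm_smul, hnv, Real.norm_eq_abs,
              abs_of_nonneg ht.1.le, mul_one]
    have hKt : K * t ≤ m / 2 := by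
      calc K * t ≤ K * T := by nlinarith [ht.2.le]
        _ ≤ m / 2 := hsm
    rw [h1, hGv]
    linarith
  have hcont : ContinuousOn g (Icc 0 T) := fun t _ => (hg' t).continuousAt.continuousWithinAt
  have hdiff : DifferentiableOn ℝ g (interior (Icc (0:ℝ) T)) :=
    fun t _ => (hg' t).differentiableAt.differentiableWithinAt
  have hmvt : g T - g 0 ≤ -(m/2) * (T - 0) :=
    (convex_Icc 0 T).image_sub_le_mul_sub_of_deriv_le hcont hdiff hderiv_le
      0 (left_mem_Icc.2 hT0) T (right_mem_Icc.2 hT0) hT0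
  have hg0 : g 0 = φ x := by simp [hg]
  have hgT : g T ≤ 0 := by
    have : -(m/2) * (T - 0) = -φ x := by
      rw [hT]; field_simp; ring
    rw [this, hg0] at hmvt
    linarith
  have h0g : (0:ℝ) ∈ Icc (g T) (g 0) := ⟨hgT, by rw [hg0]; exact h0⟩
  obtain ⟨t, ht, hgt⟩ := intermediate_value_Icc' hT0 hcont h0g
  refine ⟨x + t • v, hgt, ?_⟩
  have : ‖x - (x + t • v)‖ = t := by
    rw [show x - (x + t • v) = -(t • v) by abel, norm_neg, norm_smul, hnv,
      Real.norm_eq_abs, abs_of_nonneg ht.1, mul_one]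
  rw [this]
  calc t ≤ T := ht.2
    _ = 2 / m * φ x := by rw [hT]; ring

lemma aux_abs (φ : E → ℝ) (hφ : ContDiff ℝ 1 φ) (m K : ℝ) (hm : 0 < m) (hK0 : 0 ≤ K)
    (hlip : ∀ a b : E, ‖gradient φ a - gradient φ b‖ ≤ K * ‖a - b‖)
    (x : E) (hgx : m ≤ ‖gradient φ x‖)
    (hsm : K * (2 * |φ x| / m) ≤ m / 2) :
    ∃ y, φ y = 0 ∧ ‖x - y‖ ≤ 2 / m * |φ x| := by
  rcases le_or_gt 0 (φ x) with h0 | h0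
  · rw [abs_of_nonneg h0] at hsm ⊢
    exact aux_pos φ hφ m K hm hK0 hlip x hgx h0 hsm
  · have hgradneg : ∀ z, gradient (fun w => -φ w) z = -gradient φ z := by
      intro z
      by_cases hdz : DifferentiableAt ℝ φ z
      · simp [gradient, fderiv_neg, map_neg]
      · rw [gradient_eq_zero_of_not_differentiableAt hdz,
          gradient_eq_zero_of_not_differentiableAt (by simpa using fun h => hdz (by simpa using h.neg)), neg_zero]
    have habs : |φ x| = -φ x := abs_of_neg h0
    obtain ⟨y, hy0, hy⟩ := aux_pos (fun w => -φ w) hφ.neg m K hm hK0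
      (by intro a b; rw [hgradneg, hgradneg, neg_sub_neg, norm_sub_rev a b]; exact hlip b a)
      x (by rw [hgradneg, norm_neg]; exact hgx) (by show (0:ℝ) ≤ -φ x; linarith)
      (by rw [habs] at hsm; exact hsm)
    have hy0' : φ y = 0 := by have : -φ y = 0 := hy0; linarith
    refine ⟨y, hy0', ?_⟩
    rw [habs]
    exact hy

end Aux

/-- Quantitative distance-to-interface estimate underlying Lemma 3.6: for every `x` with
`|φ(x)| ≤ α₀·m²/2` there is `y` with `φ(y) = 0` and `‖x - y‖ ≤ (2M/m²)·|φ(x)|`;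
in particular, `dist(x, {φ = 0}) ≤ (2M/m²)·|φ(x)|`. -/
theorem stmt3 (d : ℕ) (hd : 1 ≤ d)
    (φ : EuclideanSpace ℝ (Fin d) → ℝ) (hφ : ContDiff ℝ 2 φ)
    (m M K : ℝ) (hm0 : 0 < m) (hmM : m ≤ M) (hK : 0 < K)
    (hgrad_lb : ∀ y, m ≤ ‖gradient φ y‖)
    (hgrad_ub : ∀ y, ‖gradient φ y‖ ≤ M)
    (hD2 : ∀ y, ‖iteratedFDeriv ℝ 2 φ y‖ ≤ K)
    (α₀ : ℝ) (hα₀ : α₀ = m ^ 2 / (2 * K * M ^ 2))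
    (x : EuclideanSpace ℝ (Fin d))
    (hx : |φ x| ≤ α₀ * m ^ 2 / 2) :
    (∃ y : EuclideanSpace ℝ (Fin d), φ y = 0 ∧ ‖x - y‖ ≤ 2 * M / m ^ 2 * |φ x|) ∧
      Metric.infDist x {y | φ y = 0} ≤ 2 * M / m ^ 2 * |φ x| := by
  have hφ1 : ContDiff ℝ 1 (fderiv ℝ φ) := hφ.fderiv_right (by norm_num)
  have h2 : ∀ y : EuclideanSpace ℝ (Fin d), ‖fderiv ℝ (fderiv ℝ φ) y‖ ≤ K := by
    intro y
    have e1 : iteratedFDeriv ℝ 1 (fderiv ℝ φ) y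
        = (continuousMultilinearCurryFin1 ℝ (EuclideanSpace ℝ (Fin d)) ((EuclideanSpace ℝ (Fin d)) →L[ℝ] ℝ)).symm (fderiv ℝ (fderiv ℝ φ) y) := by
      ext w; simp [iteratedFDeriv_one_apply]
    have h := norm_iteratedFDeriv_fderiv (𝕜 := ℝ) (f := φ) (x := y) (n := 1)
    rw [e1, LinearIsometryEquiv.norm_map] at h
    rw [h]
    simpa using hD2 y
  have hlip : ∀ a b : EuclideanSpace ℝ (Fin d), ‖gradient φ a - gradient φ b‖ ≤ K * ‖a - b‖ := by
    intro a b
    have e : gradient φ a - gradient φ b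
        = (InnerProductSpace.toDual ℝ (EuclideanSpace ℝ (Fin d))).symm (fderiv ℝ φ a - fderiv ℝ φ b) := by
      simp [gradient, map_sub]
    rw [e, LinearIsometryEquiv.norm_map]
    exact Convex.norm_image_sub_le_of_norm_fderiv_le
      (fun z _ => hφ1.differentiable one_ne_zero z)
      (fun z _ => h2 z) convex_univ (mem_univ b) (mem_univ a)
  have hM0 : 0 < M := lt_of_lt_of_le hm0 hmM
  have hxb : |φ x| ≤ m ^ 2 / (4 * K) := by
    rw [hα₀] at hx
    have e : m ^ 2 / (2 * K * M ^ 2) * m ^ 2 / 2 = m ^ 2 * m ^ 2 / (2 * K * M ^ 2 * 2) := by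
      ring
    have h1 : m ^ 2 * m ^ 2 / (2 * K * M ^ 2 * 2) ≤ m ^ 2 / (4 * K) := by
      rw [div_le_div_iff₀ (by positivity) (by positivity)]
      nlinarith [mul_le_mul hmM hmM hm0.le hM0.le, mul_pos hm0 hm0, mul_pos hK (mul_pos hm0 hm0)]
    rw [e] at hx
    linarith
  have hsm : K * (2 * |φ x| / m) ≤ m / 2 := by
    have h1 : K * (2 * |φ x| / m) ≤ K * (2 * (m ^ 2 / (4 * K)) / m) := by gcongr
    have h2 : K * (2 * (m ^ 2 / (4 * K)) / m) = m / 2 := by field_simp; ring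
    rw [h2] at h1; exact h1
  obtain ⟨y, hy0, hy⟩ := aux_abs φ (hφ.of_le (by norm_num)) m K hm0 hK.le hlip x (hgrad_lb x) hsm
  have hbnd : 2 / m * |φ x| ≤ 2 * M / m ^ 2 * |φ x| := by
    apply mul_le_mul_of_nonneg_right _ (abs_nonneg _)
    rw [div_le_div_iff₀ hm0 (by positivity)]
    nlinarith
  refine ⟨⟨y, hy0, hy.trans hbnd⟩, ?_⟩
  calc Metric.infDist x {y : EuclideanSpace ℝ (Fin d) | φ y = 0}
      ≤ dist x y := Metric.infDist_le_dist_of_mem hy0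
    _ = ‖x - y‖ := by rw [dist_eq_norm]
    _ ≤ 2 * M / m ^ 2 * |φ x| := hy.trans hbnd
end

section
/- For every x ∈ ℝ^d, all a, b ∈ [−α₀, α₀], and every vector G' ∈ ℝ^d one has |a − b| ≤ (2/m²)·( |φ(x + a·∇φ(x)) − φ(x + b·G')| + M·|b|·‖G' − ∇φ(x)‖ ). (Step-length comparison estimate at the core of the proof of Lemma 3.4, comparing the exact step length d along ∇φ with the discrete step length d_h along an approximate search direction G_h.) -/
open Set

set_option maxHeartbeats 1000000 in
/-- Step-length comparison estimate at the core of the proof of Lemma 3.4: for all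
`a, b ∈ [-α₀, α₀]` and every vector `G'`,
`|a - b| ≤ (2/m²)·(|φ(x + a∇φ(x)) - φ(x + b G')| + M·|b|·‖G' - ∇φ(x)‖)`. -/
theorem stmt4 (d : ℕ) (hd : 1 ≤ d)
    (φ : EuclideanSpace ℝ (Fin d) → ℝ) (hφ : ContDiff ℝ 2 φ)
    (m M K : ℝ) (hm0 : 0 < m) (hmM : m ≤ M) (hK : 0 < K)
    (hgrad_lb : ∀ y, m ≤ ‖gradient φ y‖)
    (hgrad_ub : ∀ y, ‖gradient φ y‖ ≤ M)
    (hD2 : ∀ y, ‖iteratedFDeriv ℝ 2 φ y‖ ≤ K)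
    (α₀ : ℝ) (hα₀ : α₀ = m ^ 2 / (2 * K * M ^ 2))
    (x : EuclideanSpace ℝ (Fin d)) (a b : ℝ)
    (ha : a ∈ Icc (-α₀) α₀) (hb : b ∈ Icc (-α₀) α₀)
    (G' : EuclideanSpace ℝ (Fin d)) :
    |a - b| ≤ 2 / m ^ 2 *
      (|φ (x + a • gradient φ x) - φ (x + b • G')| + M * |b| * ‖G' - gradient φ x‖) := by
  have hM0 : 0 < M := lt_of_lt_of_le hm0 hmM
  have hdiff : Differentiable ℝ φ := hφ.differentiable (by norm_num)
  have hgradnorm : ∀ y, ‖gradient φ y‖ = ‖fderiv ℝ φ y‖ := fun y => by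
    rw [gradient, LinearIsometryEquiv.norm_map]
  have hfapply : ∀ y v, fderiv ℝ φ y v = inner ℝ (gradient φ y) v := fun y v => by
    rw [gradient, ← InnerProductSpace.toDual_apply_apply, LinearIsometryEquiv.apply_symm_apply]
  -- φ is M-Lipschitz
  have hLip1 : ∀ y z : EuclideanSpace ℝ (Fin d), |φ y - φ z| ≤ M * ‖y - z‖ := by
    intro y z
    have := convex_univ.norm_image_sub_le_of_norm_fderiv_le
      (f := φ) (C := M) (fun w _ => hdiff w)
      (fun w _ => by rw [← hgradnorm]; exact hgrad_ub w) (mem_univ z) (mem_univ y)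
    simpa using this
  -- second derivative bound on fderiv (fderiv φ)
  have hdiff1 : Differentiable ℝ (fderiv ℝ φ) :=
    (hφ.fderiv_right (m := 1) (by norm_num)).differentiable one_ne_zero
  have hfd2 : ∀ y, ‖fderiv ℝ (fderiv ℝ φ) y‖ ≤ K := by
    intro y
    refine ContinuousLinearMap.opNorm_le_bound _ hK.le ?_
    intro u
    refine ContinuousLinearMap.opNorm_le_bound _ (by positivity) ?_
    intro v
    have h1 := (iteratedFDeriv ℝ 2 φ y).le_opNorm ![u, v]
    rw [iteratedFDeriv_two_apply] at h1
    simp only [Matrix.cons_val_zero, Matrix.cons_val_one, Matrix.head_cons] at h1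
    calc ‖fderiv ℝ (fderiv ℝ φ) y u v‖ ≤ ‖iteratedFDeriv ℝ 2 φ y‖ * ∏ i, ‖(![u, v]) i‖ := h1
      _ ≤ K * (‖u‖ * ‖v‖) := by
          rw [Fin.prod_univ_two]
          simp only [Matrix.cons_val_zero, Matrix.cons_val_one, Matrix.head_cons]
          exact mul_le_mul_of_nonneg_right (hD2 y) (by positivity)
      _ = K * ‖u‖ * ‖v‖ := by ring
  -- gradient is K-Lipschitz
  have hLip2 : ∀ y z : EuclideanSpace ℝ (Fin d),
      ‖gradient φ y - gradient φ z‖ ≤ K * ‖y - z‖ := by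
    intro y z
    have h2 := convex_univ.norm_image_sub_le_of_norm_fderiv_le
      (f := fderiv ℝ φ) (C := K) (fun w _ => hdiff1 w)
      (fun w _ => hfd2 w) (mem_univ z) (mem_univ y)
    have : ‖gradient φ y - gradient φ z‖ = ‖fderiv ℝ φ y - fderiv ℝ φ z‖ := by
      rw [gradient, gradient, ← map_sub, LinearIsometryEquiv.norm_map]
    rw [this]; simpa using h2
  set g := gradient φ x with hg
  have hα₀pos : 0 < α₀ := by rw [hα₀]; positivity
  -- derivative of f t = φ (x + t • g)
  set f : ℝ → ℝ := fun t => φ (x + t • g) with hf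
  have hderiv : ∀ t : ℝ, HasDerivAt f (fderiv ℝ φ (x + t • g) g) t := by
    intro t
    have hline : HasDerivAt (fun t : ℝ => x + t • g) g t := by
      simpa using ((hasDerivAt_id t).smul_const g).const_add x
    exact (hdiff (x + t • g)).hasFDerivAt.comp_hasDerivAt t hline
  -- lower bound on the derivative
  have hdlb : ∀ t ∈ Icc (-α₀) α₀, m ^ 2 / 2 ≤ fderiv ℝ φ (x + t • g) g := by
    intro t ht
    rw [hfapply]
    have h3 : inner ℝ (gradient φ (x + t • g)) g =
        (inner ℝ g g : ℝ) + inner ℝ (gradient φ (x + t • g) - g) g := by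
      rw [inner_sub_left]; ring
    rw [h3, real_inner_self_eq_norm_sq]
    have hm2 : m ^ 2 ≤ ‖g‖ ^ 2 := by
      have := hgrad_lb x
      nlinarith [norm_nonneg g]
    have habs : |(inner ℝ (gradient φ (x + t • g) - g) g : ℝ)| ≤ m ^ 2 / 2 := by
      have h4 : |(inner ℝ (gradient φ (x + t • g) - g) g : ℝ)| ≤
          ‖gradient φ (x + t • g) - g‖ * ‖g‖ := abs_real_inner_le_norm _ _
      have h5 : ‖gradient φ (x + t • g) - g‖ ≤ K * (|t| * ‖g‖) := by
        have := hLip2 (x + t • g) x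
        simpa [norm_smul, abs_of_nonneg] using this
      have h6 : |t| ≤ α₀ := abs_le.mpr ⟨ht.1, ht.2⟩
      have h7 : ‖g‖ ≤ M := hgrad_ub x
      have h8 : ‖gradient φ (x + t • g) - g‖ * ‖g‖ ≤ K * α₀ * M * M := by
        have hgn : (0:ℝ) ≤ ‖g‖ := norm_nonneg _
        have hg2 : ‖g‖ ^ 2 ≤ M ^ 2 := by nlinarith
        have h10 : |t| * ‖g‖ ^ 2 ≤ α₀ * M ^ 2 :=
          mul_le_mul h6 hg2 (by positivity) hα₀pos.le
        calc ‖gradient φ (x + t • g) - g‖ * ‖g‖ ≤ K * (|t| * ‖g‖) * ‖g‖ :=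
              mul_le_mul_of_nonneg_right h5 hgn
          _ = K * (|t| * ‖g‖ ^ 2) := by ring
          _ ≤ K * (α₀ * M ^ 2) := by nlinarith
          _ = K * α₀ * M * M := by ring
      have h9 : K * α₀ * M * M = m ^ 2 / 2 := by
        rw [hα₀]; field_simp
      linarith
    have := abs_le.mp habs
    linarith
  -- mean value estimate
  have hkey : m ^ 2 / 2 * |a - b| ≤ |f a - f b| := by
    rcases eq_or_ne a b with rfl | hab
    · simp
    · set c := min a b with hc
      set e := max a b with he
      have hce : c < e := min_lt_max.mpr hab
      have hsub : Ioo c e ⊆ Icc (-α₀) α₀ := fun z hz =>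
        ⟨le_of_lt (lt_of_le_of_lt (le_min ha.1 hb.1) hz.1),
         le_of_lt (lt_of_lt_of_le hz.2 (max_le ha.2 hb.2))⟩
      obtain ⟨z, hz, hz2⟩ := exists_hasDerivAt_eq_slope f
        (fun t => fderiv ℝ φ (x + t • g) g) hce
        (fun t _ => (hderiv t).continuousAt.continuousWithinAt)
        (fun t ht => hderiv t)
      have hlb := hdlb z (hsub hz)
      rw [hz2] at hlb
      have hec : 0 < e - c := by linarith
      have hfe : m ^ 2 / 2 * (e - c) ≤ f e - f c := by
        rw [le_div_iff₀ hec] at hlb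
        linarith [hlb]
      have habs1 : |a - b| = e - c := by
        rcases le_total a b with h | h
        · rw [abs_of_nonpos (by linarith), hc, he, min_eq_left h, max_eq_right h]; ring
        · rw [abs_of_nonneg (by linarith), hc, he, min_eq_right h, max_eq_left h]
      have hfab : f e - f c ≤ |f a - f b| := by
        rcases le_total a b with h | h
        · rw [hc, he, min_eq_left h, max_eq_right h, abs_sub_comm]
          exact le_abs_self _
        · rw [hc, he, min_eq_right h, max_eq_left h]
          exact le_abs_self _
      rw [habs1]
      linarith
  -- comparison of f b with φ (x + b • G')
  have hcomp : |f b - φ (x + b • G')| ≤ M * |b| * ‖G' - g‖ := by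
    have h11 := hLip1 (x + b • g) (x + b • G')
    have heq : x + b • g - (x + b • G') = b • (g - G') := by
      rw [smul_sub]; abel
    rw [heq, norm_smul, norm_sub_rev] at h11
    simpa [f, Real.norm_eq_abs, mul_assoc] using h11
  -- finish
  have htri : |f a - f b| ≤ |f a - φ (x + b • G')| + M * |b| * ‖G' - g‖ := by
    calc |f a - f b| ≤ |f a - φ (x + b • G')| + |φ (x + b • G') - f b| := abs_sub_le _ _ _
      _ ≤ |f a - φ (x + b • G')| + M * |b| * ‖G' - g‖ := by
          rw [abs_sub_comm (φ (x + b • G')) (f b)]; linarith [hcomp]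
  have hm2 : (0:ℝ) < m ^ 2 := by positivity
  have hfinal : m ^ 2 / 2 * |a - b| ≤
      |φ (x + a • g) - φ (x + b • G')| + M * |b| * ‖G' - g‖ := by
    calc m ^ 2 / 2 * |a - b| ≤ |f a - f b| := hkey
      _ ≤ |f a - φ (x + b • G')| + M * |b| * ‖G' - g‖ := htri
      _ = |φ (x + a • g) - φ (x + b • G')| + M * |b| * ‖G' - g‖ := rfl
  rw [div_mul_eq_mul_div, le_div_iff₀ hm2]
  linarith [hfinal]
end

section
/- Let V be a real normed vector space, W ⊆ V a linear subspace, A : V × V → ℝ a bilinear map, f : V → ℝ a linear map, and let c_c > 0, C_b ≥ 0, E ≥ 0 be constants such that: (i) A(w, w) ≥ c_c · ‖w‖² for all w ∈ W (coercivity on W); (ii) |A(u, w)| ≤ C_b · ‖u‖·‖w‖ for all u ∈ V and w ∈ W (boundedness); (iii) u_h ∈ W satisfies A(u_h, w) = f(w) for all w ∈ W (discrete solution); (iv) ũ ∈ V satisfies |A(ũ, w) − f(w)| ≤ E · ‖w‖ for all w ∈ W (consistency error bound). Then for every v ∈ W one has ‖ũ − u_h‖ ≤ (1 + C_b / c_c)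 · ‖ũ − v‖ + E / c_c. (Abstract form of the Strang lemma, Lemma 5.5 of the paper, whose proof uses exactly these properties.) -/
/-- Abstract form of the Strang lemma (Lemma 5.5 of the paper): from coercivity of `A`
on the subspace `W`, boundedness of `A`, the discrete equations for `uₕ ∈ W`, and a
consistency error bound for `ũ`, one gets for every `v ∈ W`
`‖ũ - uₕ‖ ≤ (1 + C_b/c_c)·‖ũ - v‖ + E/c_c`. -/
theorem stmt13 (V : Type*) [NormedAddCommGroup V] [NormedSpace ℝ V]
    (W : Submodule ℝ V)
    (A : V →ₗ[ℝ] V →ₗ[ℝ] ℝ) (f : V →ₗ[ℝ] ℝ)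
    (cc Cb E : ℝ) (hcc : 0 < cc) (hCb : 0 ≤ Cb) (hE : 0 ≤ E)
    (hcoercive : ∀ w ∈ W, cc * ‖w‖ ^ 2 ≤ A w w)
    (hbounded : ∀ u : V, ∀ w ∈ W, |A u w| ≤ Cb * ‖u‖ * ‖w‖)
    (uh : V) (huh : uh ∈ W) (hdiscrete : ∀ w ∈ W, A uh w = f w)
    (ut : V) (hconsistency : ∀ w ∈ W, |A ut w - f w| ≤ E * ‖w‖)
    (v : V) (hv : v ∈ W) :
    ‖ut - uh‖ ≤ (1 + Cb / cc) * ‖ut - v‖ + E / cc := by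
  set e := v - uh with he_def
  have he : e ∈ W := W.sub_mem hv huh
  -- key bound: cc * ‖e‖^2 ≤ Cb * ‖ut - v‖ * ‖e‖ + E * ‖e‖
  have key : cc * ‖e‖ ^ 2 ≤ Cb * ‖ut - v‖ * ‖e‖ + E * ‖e‖ := by
    have h1 : cc * ‖e‖ ^ 2 ≤ A e e := hcoercive e he
    have h2 : A e e = (A v e - A ut e) + (A ut e - f e) := by
      have hd := hdiscrete e he
      have hx : A e e = A v e - A uh e := by
        have hA : A e = A v - A uh := by rw [he_def, map_sub]
        rw [hA, LinearMap.sub_apply]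
      rw [hx, hd]; ring
    have h3 : |A v e - A ut e| ≤ Cb * ‖v - ut‖ * ‖e‖ := by
      have := hbounded (v - ut) e he
      simpa [map_sub, LinearMap.sub_apply] using this
    have h4 : |A ut e - f e| ≤ E * ‖e‖ := hconsistency e he
    have hvu : ‖v - ut‖ = ‖ut - v‖ := by rw [norm_sub_rev]
    rw [hvu] at h3
    calc cc * ‖e‖ ^ 2 ≤ A e e := h1
      _ = (A v e - A ut e) + (A ut e - f e) := h2
      _ ≤ Cb * ‖ut - v‖ * ‖e‖ + E * ‖e‖ := by
          have := abs_le.mp h3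
          have := abs_le.mp h4
          linarith [(abs_le.mp h3).2, (abs_le.mp h4).2]
  have hne : ‖e‖ ≤ (Cb * ‖ut - v‖ + E) / cc := by
    rcases eq_or_lt_of_le (norm_nonneg e) with h0 | h0
    · rw [← h0]
      positivity
    · rw [le_div_iff₀ hcc]
      have : cc * ‖e‖ * ‖e‖ ≤ (Cb * ‖ut - v‖ + E) * ‖e‖ := by
        ring_nf
        ring_nf at key
        nlinarith [key]
      exact le_of_mul_le_mul_right (by linarith) h0
  have htri : ‖ut - uh‖ ≤ ‖ut - v‖ + ‖e‖ := by
    have : ut - uh = (ut - v) + e := by rw [he_def]; abel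
    rw [this]
    exact norm_add_le _ _
  have : (Cb * ‖ut - v‖ + E) / cc = (Cb / cc) * ‖ut - v‖ + E / cc := by ring
  rw [this] at hne
  linarith
end
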